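/- arXiv:2105.09797 — 3 statements merged into one kernel-verified Lean document; each statement's English description precedes it below -/
import Mathlib

section
/- If G is a well-dominated graph and M is any independent set of vertices in G, then the graph G - N[M] (obtained by deleting the closed neighborhood of M) is well-dominated. -/
open SimpleGraph

variable {V : Type*}

/-- Closed neighborhood of a vertex. -/
def closedNbhd (G : SimpleGraph V) (v : V) : Set V := insert v (G.neighborSet v)

/-- Closed neighborhood of a set of vertices. -/
def closedNbhdSet (G : SimpleGraph V) (A : Set V) : Set V := ⋃ a ∈ A, closedNbhd G a

/-- `D` is a dominating set of `G`. -/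
def IsDomSet (G : SimpleGraph V) (D : Set V) : Prop :=
  ∀ v, ∃ u ∈ D, v ∈ closedNbhd G u

/-- `D` is a minimal dominating set of `G`. -/
def IsMinimalDomSet (G : SimpleGraph V) (D : Set V) : Prop :=
  IsDomSet G D ∧ ∀ D' ⊆ D, IsDomSet G D' → D' = D

/-- The domination number `γ`. -/
noncomputable def domNum (G : SimpleGraph V) : ℕ :=
  sInf {n | ∃ D : Set V, IsDomSet G D ∧ D.ncard = n}

/-- The upper domination number `Γ`. -/
noncomputable def upperDomNum (G : SimpleGraph V) : ℕ :=
  sSup {n | ∃ D : Set V, IsMinimalDomSet G D ∧ D.ncard = n}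

/-- A graph is well-dominated if `γ = Γ`. -/
def WellDominated (G : SimpleGraph V) : Prop := domNum G = upperDomNum G

/-- `A` is an independent set of `G`. -/
def IsIndep (G : SimpleGraph V) (A : Set V) : Prop :=
  ∀ u ∈ A, ∀ v ∈ A, ¬ G.Adj u v

/-- `A` is a maximal independent set of `G`. -/
def IsMaxIndep (G : SimpleGraph V) (A : Set V) : Prop :=
  IsIndep G A ∧ ∀ B, IsIndep G B → A ⊆ B → B = A

/-- The independence number `α`. -/
noncomputable def indepNum (G : SimpleGraph V) : ℕ :=
  sSup {n | ∃ A : Set V, IsIndep G A ∧ A.ncard = n}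

/-- The strong product of two graphs. -/
def strongProd {α β : Type*} (G : SimpleGraph α) (H : SimpleGraph β) :
    SimpleGraph (α × β) where
  Adj x y := x ≠ y ∧ (x.1 = y.1 ∨ G.Adj x.1 y.1) ∧ (x.2 = y.2 ∨ H.Adj x.2 y.2)
  symm := by
    constructor
    rintro x y ⟨h1, h2, h3⟩
    refine ⟨h1.symm, ?_, ?_⟩
    · cases h2 with
      | inl h => exact Or.inl h.symm
      | inr h => exact Or.inr h.symm
    · cases h3 with
      | inl h => exact Or.inl h.symm
      | inr h => exact Or.inr h.symm
  loopless := by constructor; rintro x ⟨h1, _⟩; exact h1 rfl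

/-- The direct (tensor) product of two graphs. -/
def tensorProd {α β : Type*} (G : SimpleGraph α) (H : SimpleGraph β) :
    SimpleGraph (α × β) where
  Adj x y := G.Adj x.1 y.1 ∧ H.Adj x.2 y.2
  symm := ⟨fun _ _ h => ⟨h.1.symm, h.2.symm⟩⟩
  loopless := ⟨fun _ h => G.loopless.irrefl _ h.1⟩

/-- The corona `G ⊙ K₁`. -/
def corona {α : Type*} (G : SimpleGraph α) : SimpleGraph (α ⊕ α) :=
  SimpleGraph.fromRel (fun x y =>
    match x, y with
    | Sum.inl u, Sum.inl v => G.Adj u v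
    | Sum.inl u, Sum.inr v => u = v
    | _, _ => False)

/-- The private neighborhood `pn[u,D] = N[u] - N[D - {u}]`. -/
def privateNbhd (G : SimpleGraph V) (D : Set V) (u : V) : Set V :=
  {x | x ∈ closedNbhd G u ∧ ∀ d ∈ D, d ≠ u → x ∉ closedNbhd G d}

/-- A set `D` is open irredundant if every vertex of `D` has an external
private neighbor. -/
def IsOpenIrred (G : SimpleGraph V) (D : Set V) : Prop :=
  ∀ u ∈ D, ∃ x ∈ G.neighborSet u, ∀ d ∈ D, d ≠ u → x ∉ closedNbhd G d

/-!
If `D` is a minimal dominating set of `G - N[M]`, then `M ∪ D` is a minimal dominating set of `G`: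
it dominates because `M` covers `N[M]`, no vertex of `D` is in `N[M]`, and since `M` is
independent, the only vertex of `M ∪ D` dominating `m ∈ M` is `m` itself. Hence in a
well-dominated `G` every minimal dominating set of `G - N[M]` has `γ(G) - |M|` vertices.
-/

section Domination

variable {G : SimpleGraph V}

lemma self_mem_closedNbhd (G : SimpleGraph V) (v : V) : v ∈ closedNbhd G v :=
  Set.mem_insert _ _

lemma mem_closedNbhd_iff {u v : V} : v ∈ closedNbhd G u ↔ v = u ∨ G.Adj u v := by
  simp [closedNbhd, SimpleGraph.mem_neighborSet]

lemma mem_closedNbhdSet_iff {M : Set V} {v : V} :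
    v ∈ closedNbhdSet G M ↔ ∃ a ∈ M, v ∈ closedNbhd G a := by
  simp [closedNbhdSet]

lemma isDomSet_univ (G : SimpleGraph V) : IsDomSet G Set.univ :=
  fun v => ⟨v, trivial, self_mem_closedNbhd G v⟩

lemma IsDomSet.exists_isMinimalDomSet_subset [Finite V] {D : Set V} (hD : IsDomSet G D) :
    ∃ D' ⊆ D, IsMinimalDomSet G D' := by
  obtain ⟨D', ⟨hD'D, hD'⟩, hmin⟩ := Set.Finite.exists_minimalFor id
    {E | E ⊆ D ∧ IsDomSet G E} (Set.toFinite _) ⟨D, subset_rfl, hD⟩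
  exact ⟨D', hD'D, hD', fun E hE hEdom => hE.antisymm (hmin ⟨hE.trans hD'D, hEdom⟩ hE)⟩

lemma WellDominated.ncard_eq_domNum [Finite V] (hG : WellDominated G) {D : Set V}
    (hD : IsMinimalDomSet G D) : D.ncard = domNum G := by
  have hle_card : domNum G ≤ D.ncard := Nat.sInf_le ⟨D, hD.1, rfl⟩
  have hle_upper : D.ncard ≤ upperDomNum G := by
    refine le_csSup ⟨Nat.card V, ?_⟩ ⟨D, hD, rfl⟩
    rintro n ⟨E, -, rfl⟩
    exact Set.ncard_le_card E
  rw [WellDominated] at hG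
  omega

lemma wellDominated_of_ncard_eq [Finite V]
    (h : ∀ D E, IsMinimalDomSet G D → IsMinimalDomSet G E → D.ncard = E.ncard) :
    WellDominated G := by
  obtain ⟨D₀, -, hD₀⟩ := (isDomSet_univ G).exists_isMinimalDomSet_subset
  have hdom : domNum G = D₀.ncard := by
    refine le_antisymm (Nat.sInf_le ⟨D₀, hD₀.1, rfl⟩) (le_csInf ⟨_, D₀, hD₀.1, rfl⟩ ?_)
    rintro n ⟨D, hD, rfl⟩
    obtain ⟨D', hD'D, hD'⟩ := hD.exists_isMinimalDomSet_subset
    exact (h D₀ D' hD₀ hD').le.trans (Set.ncard_le_ncard hD'D)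
  have hupper : upperDomNum G = D₀.ncard := by
    have hcards : {n | ∃ D, IsMinimalDomSet G D ∧ D.ncard = n} = {D₀.ncard} := by
      ext n
      constructor
      · rintro ⟨D, hD, rfl⟩
        exact h D D₀ hD hD₀
      · rintro rfl
        exact ⟨D₀, hD₀, rfl⟩
    rw [upperDomNum, hcards, csSup_singleton]
  rw [WellDominated, hdom, hupper]

end Domination

section DeleteClosedNbhd

variable {G : SimpleGraph V} {M : Set V}

local notation "G'" => G.induce (closedNbhdSet G M)ᶜ

lemma induce_compl_mem_closedNbhd_iff {u v : ((closedNbhdSet G M)ᶜ : Set V)} :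
    v ∈ closedNbhd G' u ↔ (v : V) ∈ closedNbhd G u := by
  rw [mem_closedNbhd_iff, mem_closedNbhd_iff, Subtype.ext_iff]
  rfl

lemma isDomSet_union_image_val {D : Set ((closedNbhdSet G M)ᶜ : Set V)} (hD : IsDomSet G' D) :
    IsDomSet G (M ∪ Subtype.val '' D) := by
  intro v
  by_cases hv : v ∈ closedNbhdSet G M
  · obtain ⟨a, haM, hva⟩ := mem_closedNbhdSet_iff.mp hv
    exact ⟨a, Or.inl haM, hva⟩
  · obtain ⟨u, huD, hvu⟩ := hD ⟨v, hv⟩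
    exact ⟨u, Or.inr ⟨u, huD, rfl⟩, induce_compl_mem_closedNbhd_iff.mp hvu⟩

lemma subset_of_isDomSet_of_subset_union (hM : IsIndep G M)
    {D : Set ((closedNbhdSet G M)ᶜ : Set V)} {E : Set V} (hE : E ⊆ M ∪ Subtype.val '' D)
    (hEdom : IsDomSet G E) : M ⊆ E := by
  intro m hm
  obtain ⟨u, huE, hmu⟩ := hEdom m
  rcases hE huE with huM | ⟨d, -, rfl⟩
  · rcases mem_closedNbhd_iff.mp hmu with rfl | hadj
    · exact huE
    · exact absurd hadj (hM u huM m hm)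
  · refine absurd (mem_closedNbhdSet_iff.mpr ⟨m, hm, ?_⟩) d.2
    rcases mem_closedNbhd_iff.mp hmu with rfl | hadj
    · exact self_mem_closedNbhd G _
    · exact mem_closedNbhd_iff.mpr (Or.inr hadj.symm)

lemma isDomSet_preimage_val_of_subset_union {D : Set ((closedNbhdSet G M)ᶜ : Set V)} {E : Set V}
    (hE : E ⊆ M ∪ Subtype.val '' D) (hEdom : IsDomSet G E) :
    IsDomSet G' (Subtype.val ⁻¹' E) := by
  intro v
  obtain ⟨u, huE, hvu⟩ := hEdom v
  rcases hE huE with huM | ⟨d, -, rfl⟩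
  · exact absurd (mem_closedNbhdSet_iff.mpr ⟨u, huM, hvu⟩) v.2
  · exact ⟨d, huE, induce_compl_mem_closedNbhd_iff.mpr hvu⟩

lemma IsMinimalDomSet.union_image_val (hM : IsIndep G M)
    {D : Set ((closedNbhdSet G M)ᶜ : Set V)} (hD : IsMinimalDomSet G' D) :
    IsMinimalDomSet G (M ∪ Subtype.val '' D) := by
  refine ⟨isDomSet_union_image_val hD.1, fun E hE hEdom => hE.antisymm ?_⟩
  have hpre : Subtype.val ⁻¹' E = D := by
    refine hD.2 _ (fun x hx => ?_) (isDomSet_preimage_val_of_subset_union hE hEdom)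
    rcases hE hx with hxM | ⟨d, hdD, hdx⟩
    · exact absurd (mem_closedNbhdSet_iff.mpr ⟨(x : V), hxM, self_mem_closedNbhd G x⟩) x.2
    · rwa [← Subtype.val_injective hdx]
  refine Set.union_subset (subset_of_isDomSet_of_subset_union hM hE hEdom) ?_
  rw [← hpre]
  exact Set.image_preimage_subset _ _

lemma ncard_union_image_val [Finite V] (D : Set ((closedNbhdSet G M)ᶜ : Set V)) :
    (M ∪ Subtype.val '' D).ncard = M.ncard + D.ncard := by
  rw [Set.ncard_union_eq ?_ (Set.toFinite _) (Set.toFinite _),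
    Set.ncard_image_of_injective _ Subtype.val_injective]
  rw [Set.disjoint_left]
  rintro x hxM ⟨d, -, rfl⟩
  exact d.2 (mem_closedNbhdSet_iff.mpr ⟨d, hxM, self_mem_closedNbhd G d⟩)

end DeleteClosedNbhd

/-- If `G` is well-dominated and `M` is an independent set, then `G - N[M]`
is well-dominated. -/
theorem stmt_0 {V : Type*} [Fintype V] (G : SimpleGraph V)
    (hG : WellDominated G) (M : Set V) (hM : IsIndep G M) :
    WellDominated (G.induce (closedNbhdSet G M)ᶜ) := by
  refine wellDominated_of_ncard_eq fun D E hD hE => ?_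
  have hD' := hG.ncard_eq_domNum (hD.union_image_val hM)
  have hE' := hG.ncard_eq_domNum (hE.union_image_val hM)
  rw [ncard_union_image_val] at hD' hE'
  omega
end

section
/- For any connected graph F, the direct product (F ⊙ K₁) × K₂ is isomorphic to (F × K₂) ⊙ K₁, where ⊙ denotes the corona and × the direct product. -/
open SimpleGraph

variable {V : Type*}

/-!
In `(F ⊙ K₁) × K₂` the pendant copy `(u', j)` is adjacent to `(u, i)` exactly when `i ≠ j`,
i.e. when `j = i + 1` in `Fin 2`. Hence `(u, i) ↦ (u, i)`, `(u', j) ↦ (u, j + 1)'` is an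
isomorphism: it matches every vertex of `F × K₂` with its unique pendant neighbour.
-/

section Corona

variable {α : Type*} (G : SimpleGraph α) (u v : α)

@[simp]
theorem corona_adj_inl_inl : (corona G).Adj (.inl u) (.inl v) ↔ G.Adj u v := by
  simp only [corona, fromRel_adj, ne_eq, Sum.inl.injEq]
  exact ⟨fun ⟨_, h⟩ => h.elim id G.adj_symm, fun h => ⟨G.ne_of_adj h, .inl h⟩⟩

@[simp]
theorem corona_adj_inl_inr : (corona G).Adj (.inl u) (.inr v) ↔ u = v := by
  simp [corona, fromRel_adj]

@[simp]
theorem corona_adj_inr_inl : (corona G).Adj (.inr u) (.inl v) ↔ u = v := by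
  simp [corona, fromRel_adj, eq_comm]

@[simp]
theorem corona_adj_inr_inr : ¬(corona G).Adj (.inr u) (.inr v) := by
  simp [corona, fromRel_adj]

end Corona

@[simp]
theorem tensorProd_adj {α β : Type*} (G : SimpleGraph α) (H : SimpleGraph β) (p q : α × β) :
    (tensorProd G H).Adj p q ↔ G.Adj p.1 q.1 ∧ H.Adj p.2 q.2 :=
  Iff.rfl

theorem Fin.two_ne_iff_eq_add_one (i j : Fin 2) : i ≠ j ↔ i = j + 1 := by
  fin_cases i <;> fin_cases j <;> decide

theorem Fin.two_eq_add_one_comm (i j : Fin 2) : i = j + 1 ↔ j = i + 1 := by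
  fin_cases i <;> fin_cases j <;> decide

def coronaTensorKTwoEquiv (α : Type*) : (α ⊕ α) × Fin 2 ≃ (α × Fin 2) ⊕ (α × Fin 2) :=
  (Equiv.sumProdDistrib α α (Fin 2)).trans
    (Equiv.sumCongr (Equiv.refl _) (Equiv.prodCongr (Equiv.refl α) (Equiv.addRight 1)))

def coronaTensorKTwoIso {α : Type*} (G : SimpleGraph α) :
    tensorProd (corona G) (⊤ : SimpleGraph (Fin 2)) ≃g
      corona (tensorProd G (⊤ : SimpleGraph (Fin 2))) where
  toEquiv := coronaTensorKTwoEquiv α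
  map_rel_iff' := by
    rintro ⟨u | u, i⟩ ⟨v | v, j⟩ <;>
      simp [coronaTensorKTwoEquiv, Fin.two_ne_iff_eq_add_one, Fin.two_eq_add_one_comm, eq_comm]

theorem stmt_10_general {α : Type*} (F : SimpleGraph α) :
    Nonempty ((tensorProd (corona F) (⊤ : SimpleGraph (Fin 2))) ≃g
      corona (tensorProd F (⊤ : SimpleGraph (Fin 2)))) :=
  ⟨coronaTensorKTwoIso F⟩

/-- For a connected graph `F`, `(F ⊙ K₁) × K₂ ≅ (F × K₂) ⊙ K₁`. -/
theorem stmt_10 {α : Type*} (F : SimpleGraph α) (hF : F.Connected) :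
    Nonempty ((tensorProd (corona F) (⊤ : SimpleGraph (Fin 2))) ≃g
      corona (tensorProd F (⊤ : SimpleGraph (Fin 2)))) :=
  stmt_10_general F
end

section
/- If a nontrivial connected graph G has a minimum dominating set D containing a vertex u with pn[u,D] = {u}, then G □ H is not well-dominated for every nontrivial connected graph H. -/
open SimpleGraph

variable {V : Type*}

/-!
Let `D` be a minimum dominating set of `G` with `pn[u,D] = {u}` and let `h₁h₂` be an edge of
`H`. Every vertex of `G` other than `u` is dominated by `D - {u}`, so `(D × V(H)) - {(u,h₁)}`
still dominates `G □ H`, and `γ(G □ H) < γ(G)·|H|`. On the other hand, by Bollobás–Cockayne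
the graph `G`, having no isolated vertices, has a minimum dominating set `B` in which every
vertex has an external private neighbour; then `B × V(H)` is open irredundant, hence a minimal
dominating set of `G □ H` of size `γ(G)·|H|`, so `Γ(G □ H) ≥ γ(G)·|H|`.
-/

section Domination

variable {G : SimpleGraph V}

lemma mem_closedNbhd_self (v : V) : v ∈ closedNbhd G v :=
  Set.mem_insert _ _

lemma mem_closedNbhd_of_adj {u v : V} (h : G.Adj u v) : v ∈ closedNbhd G u :=
  Set.mem_insert_of_mem _ h

lemma domNum_le_ncard {D : Set V} (hD : IsDomSet G D) : domNum G ≤ D.ncard :=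
  Nat.sInf_le ⟨D, hD, rfl⟩

lemma exists_isDomSet_ncard_eq_domNum (G : SimpleGraph V) :
    ∃ D : Set V, IsDomSet G D ∧ D.ncard = domNum G := by
  have hne : {n | ∃ D : Set V, IsDomSet G D ∧ D.ncard = n}.Nonempty :=
    ⟨_, Set.univ, fun v => ⟨v, trivial, mem_closedNbhd_self v⟩, rfl⟩
  exact Nat.sInf_mem hne

lemma ncard_le_upperDomNum [Finite V] {D : Set V} (hD : IsMinimalDomSet G D) :
    D.ncard ≤ upperDomNum G := by
  unfold upperDomNum
  refine le_csSup ⟨Nat.card V, ?_⟩ ⟨D, hD, rfl⟩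
  rintro _ ⟨E, -, rfl⟩
  exact Set.ncard_le_card E

lemma IsDomSet.of_diff_singleton_subset {X Y : Set V} {b : V} (hX : IsDomSet G X)
    (hXY : X \ {b} ⊆ Y) (hb : ∀ x ∈ closedNbhd G b, ∃ y ∈ Y, x ∈ closedNbhd G y) :
    IsDomSet G Y := by
  intro v
  obtain ⟨d, hd, hvd⟩ := hX v
  by_cases hdb : d = b
  · subst hdb
    exact hb v hvd
  · exact ⟨d, hXY ⟨hd, hdb⟩, hvd⟩

lemma IsDomSet.exists_mem_diff_singleton_of_privateNbhd_subset {D : Set V} {u x : V}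
    (hD : IsDomSet G D) (hpn : privateNbhd G D u ⊆ {u}) (hxu : x ≠ u) :
    ∃ d ∈ D \ {u}, x ∈ closedNbhd G d := by
  obtain ⟨d, hd, hxd⟩ := hD x
  by_cases hdu : d = u
  · subst hdu
    have hx : ¬ (x ∈ closedNbhd G d ∧ ∀ d' ∈ D, d' ≠ d → x ∉ closedNbhd G d') :=
      fun hx => hxu (hpn hx)
    push Not at hx
    obtain ⟨d', hd', hd'd, hxd'⟩ := hx hxd
    exact ⟨d', ⟨hd', hd'd⟩, hxd'⟩
  · exact ⟨d, ⟨hd, hdu⟩, hxd⟩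

lemma IsOpenIrred.isMinimalDomSet {D : Set V} (hD : IsDomSet G D) (hirr : IsOpenIrred G D) :
    IsMinimalDomSet G D := by
  refine ⟨hD, fun D' hD'D hD' => hD'D.antisymm fun b hb => ?_⟩
  by_contra hbD'
  obtain ⟨x, -, hx⟩ := hirr b hb
  obtain ⟨d, hd, hxd⟩ := hD' x
  exact hx d (hD'D hd) (by rintro rfl; exact hbD' hd) hxd

end Domination

section BollobasCockayne

variable {G : SimpleGraph V}

def adjPairsIn (G : SimpleGraph V) (X : Set V) : Set (V × V) :=
  {p | p.1 ∈ X ∧ p.2 ∈ X ∧ G.Adj p.1 p.2}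

variable [Finite V] {X : Set V} {b : V}

lemma IsDomSet.not_adj_of_not_externalPrivate (hX : IsDomSet G X)
    (hXmin : X.ncard = domNum G) (hb : b ∈ X)
    (hnp : ∀ x, G.Adj b x → ∃ d ∈ X, d ≠ b ∧ x ∈ closedNbhd G d) :
    ∀ d ∈ X, ¬ G.Adj d b := by
  intro d hd hdb
  have hdom : IsDomSet G (X \ {b}) := hX.of_diff_singleton_subset subset_rfl fun x hx => by
    rcases mem_closedNbhd_iff.1 hx with rfl | hbx
    · exact ⟨d, ⟨hd, hdb.ne⟩, mem_closedNbhd_of_adj hdb⟩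
    · obtain ⟨d', hd', hd'b, hxd'⟩ := hnp x hbx
      exact ⟨d', ⟨hd', hd'b⟩, hxd'⟩
  have := domNum_le_ncard hdom
  have := Set.ncard_sdiff_singleton_lt_of_mem hb
  omega

lemma IsDomSet.exchange_of_not_externalPrivate (hX : IsDomSet G X)
    (hXmin : X.ncard = domNum G) (hb : b ∈ X)
    (hnp : ∀ x, G.Adj b x → ∃ d ∈ X, d ≠ b ∧ x ∈ closedNbhd G d) {w : V} (hbw : G.Adj b w) :
    IsDomSet G (insert w (X \ {b})) ∧ (insert w (X \ {b})).ncard = domNum G ∧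
      adjPairsIn G X ⊂ adjPairsIn G (insert w (X \ {b})) := by
  have hiso := hX.not_adj_of_not_externalPrivate hXmin hb hnp
  have hwX : w ∉ X := fun hw => hiso w hw hbw.symm
  obtain ⟨y, hy, hyb, hwNy⟩ := hnp w hbw
  have hwy : G.Adj w y := by
    rcases mem_closedNbhd_iff.1 hwNy with rfl | hyw
    · exact absurd hy hwX
    · exact hyw.symm
  refine ⟨?_, ?_, ?_, ?_⟩
  · refine hX.of_diff_singleton_subset (Set.subset_insert _ _) fun x hx => ?_
    rcases mem_closedNbhd_iff.1 hx with rfl | hbx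
    · exact ⟨w, Set.mem_insert _ _, mem_closedNbhd_of_adj hbw.symm⟩
    · obtain ⟨d, hd, hdb, hxd⟩ := hnp x hbx
      exact ⟨d, Set.mem_insert_of_mem _ ⟨hd, hdb⟩, hxd⟩
  · rw [Set.ncard_insert_of_notMem (fun h => hwX h.1), Set.ncard_sdiff_singleton_add_one hb,
      hXmin]
  · rintro ⟨p₁, p₂⟩ ⟨h₁, h₂, hadj⟩
    have hp₂ : p₂ ≠ b := by rintro rfl; exact hiso p₁ h₁ hadj
    have hp₁ : p₁ ≠ b := by rintro rfl; exact hiso p₂ h₂ hadj.symm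
    exact ⟨Set.mem_insert_of_mem _ ⟨h₁, hp₁⟩, Set.mem_insert_of_mem _ ⟨h₂, hp₂⟩, hadj⟩
  · intro hsub
    have hwy' : (w, y) ∈ adjPairsIn G (insert w (X \ {b})) :=
      ⟨Set.mem_insert _ _, Set.mem_insert_of_mem _ ⟨hy, hyb⟩, hwy⟩
    exact hwX (hsub hwy').1

/-- Bollobás–Cockayne. Take a minimum dominating set with as many adjacent pairs as possible: a
vertex without external private neighbour could be exchanged for one of its neighbours. -/
theorem exists_isDomSet_ncard_eq_domNum_isOpenIrred (hG : ∀ v, ∃ w, G.Adj v w) :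
    ∃ B : Set V, IsDomSet G B ∧ B.ncard = domNum G ∧ IsOpenIrred G B := by
  obtain ⟨X, ⟨hX, hXmin⟩, hXmax⟩ :=
    (Set.toFinite {X : Set V | IsDomSet G X ∧ X.ncard = domNum G}).exists_maximalFor
      (fun X => (adjPairsIn G X).ncard) _ (exists_isDomSet_ncard_eq_domNum G)
  refine ⟨X, hX, hXmin, fun b hb => ?_⟩
  by_contra! hnp
  obtain ⟨w, hbw⟩ := hG b
  obtain ⟨hX'dom, hX'min, hlt⟩ := hX.exchange_of_not_externalPrivate hXmin hb hnp hbw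
  have hlt := Set.ncard_lt_ncard hlt
  exact hlt.not_ge (hXmax ⟨hX'dom, hX'min⟩ hlt.le)

end BollobasCockayne

section BoxProd

variable {α β : Type*} {G : SimpleGraph α} {H : SimpleGraph β}

lemma mem_closedNbhd_boxProd_of_left {a a' : α} (b : β) (h : a' ∈ closedNbhd G a) :
    (a', b) ∈ closedNbhd (G □ H) (a, b) := by
  rcases mem_closedNbhd_iff.1 h with rfl | hadj
  · exact mem_closedNbhd_self _
  · exact mem_closedNbhd_of_adj (boxProd_adj.2 (Or.inl ⟨hadj, rfl⟩))

lemma IsDomSet.prod_univ {B : Set α} (hB : IsDomSet G B) :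
    IsDomSet (G □ H) (B ×ˢ Set.univ) := by
  rintro ⟨a, b⟩
  obtain ⟨d, hd, had⟩ := hB a
  exact ⟨(d, b), ⟨hd, trivial⟩, mem_closedNbhd_boxProd_of_left b had⟩

lemma IsOpenIrred.prod_univ {B : Set α} (hB : IsOpenIrred G B) :
    IsOpenIrred (G □ H) (B ×ˢ Set.univ) := by
  rintro ⟨a, b⟩ ⟨ha, -⟩
  obtain ⟨x, hax, hx⟩ := hB a ha
  have hxB : x ∉ B := fun hxB => hx x hxB (G.ne_of_adj hax).symm (mem_closedNbhd_self x)
  refine ⟨(x, b), boxProd_adj.2 (Or.inl ⟨hax, rfl⟩), ?_⟩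
  rintro ⟨d, b'⟩ ⟨hd, -⟩ hne hmem
  rcases mem_closedNbhd_iff.1 hmem with heq | hadj
  · obtain ⟨rfl, -⟩ := Prod.mk.inj heq
    exact hxB hd
  rcases boxProd_adj.1 hadj with ⟨hdx, rfl⟩ | ⟨-, rfl⟩
  · by_cases hda : d = a
    · exact hne (by rw [hda])
    · exact hx d hd hda (mem_closedNbhd_of_adj hdx)
  · exact hxB hd

lemma IsDomSet.prod_univ_diff_singleton {D : Set α} {u : α} {b b' : β} (hD : IsDomSet G D)
    (hu : u ∈ D) (hpn : privateNbhd G D u ⊆ {u}) (hbb' : H.Adj b b') :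
    IsDomSet (G □ H) (D ×ˢ Set.univ \ {(u, b)}) := by
  rintro ⟨x, c⟩
  by_cases hxu : x = u
  · subst hxu
    by_cases hcb : c = b
    · subst hcb
      exact ⟨(x, b'), ⟨⟨hu, trivial⟩, fun h => hbb'.ne' (congrArg Prod.snd h)⟩,
        mem_closedNbhd_of_adj (boxProd_adj.2 (Or.inr ⟨hbb'.symm, rfl⟩))⟩
    · exact ⟨(x, c), ⟨⟨hu, trivial⟩, fun h => hcb (congrArg Prod.snd h)⟩, mem_closedNbhd_self _⟩
  · obtain ⟨d, ⟨hd, hdu⟩, hxd⟩ := hD.exists_mem_diff_singleton_of_privateNbhd_subset hpn hxu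
    exact ⟨(d, c), ⟨⟨hd, trivial⟩, fun h => hdu (congrArg Prod.fst h)⟩,
      mem_closedNbhd_boxProd_of_left c hxd⟩

end BoxProd

/-- If a nontrivial connected graph `G` has a minimum dominating set `D`
containing a vertex `u` with `pn[u,D] = {u}`, then `G □ H` is not
well-dominated for every nontrivial connected graph `H`. -/
theorem stmt_15 {α β : Type*} [Fintype α] [Fintype β]
    (G : SimpleGraph α) (H : SimpleGraph β)
    (hG : G.Connected) (hα : 2 ≤ Fintype.card α)
    (hH : H.Connected) (hβ : 2 ≤ Fintype.card β)
    (D : Set α) (hD : IsDomSet G D) (hmin : D.ncard = domNum G)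
    (u : α) (hu : u ∈ D) (hpn : privateNbhd G D u = {u}) :
    ¬ WellDominated (G □ H) := by
  have : Nontrivial α := Fintype.one_lt_card_iff_nontrivial.1 hα
  have : Nontrivial β := Fintype.one_lt_card_iff_nontrivial.1 hβ
  obtain ⟨b⟩ := hH.nonempty
  obtain ⟨b', hbb'⟩ := hH.preconnected.exists_adj_of_nontrivial b
  obtain ⟨B, hB, hBmin, hBirr⟩ :=
    exists_isDomSet_ncard_eq_domNum_isOpenIrred hG.preconnected.exists_adj_of_nontrivial
  have hlt : domNum (G □ H) < upperDomNum (G □ H) := calc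
    domNum (G □ H) ≤ (D ×ˢ Set.univ \ {(u, b)}).ncard :=
      domNum_le_ncard (hD.prod_univ_diff_singleton hu hpn.subset hbb')
    _ < (D ×ˢ (Set.univ : Set β)).ncard := Set.ncard_sdiff_singleton_lt_of_mem ⟨hu, trivial⟩
    _ = (B ×ˢ (Set.univ : Set β)).ncard := by rw [Set.ncard_prod, Set.ncard_prod, hmin, hBmin]
    _ ≤ upperDomNum (G □ H) := ncard_le_upperDomNum (hBirr.prod_univ.isMinimalDomSet hB.prod_univ)
  exact hlt.ne
end
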